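/- Let A be a set of agents, R a set of indivisible goods, and suppose each agent has an additive 0/1 valuation over R (the value of a bundle is the number of goods in it that the agent values), and suppose every good in R is valued by at least one agent. Then an allocation π is Pareto-efficient if and only if π is complete and non-wasteful. -/
import Mathlib


/-- For additive 0/1 valuations in which every good is valued by at
least one agent, an allocation (a family of pairwise disjoint bundles) is
Pareto-efficient iff it is complete and non-wasteful. -/
theorem pareto_iff_complete_and_nonwasteful
    {A R : Type*} [Fintype A] [Fintype R] [DecidableEq A] [DecidableEq R]
    (v : A → R → ℕ) (hv01 : ∀ a g, v a g ≤ 1)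
    (hvalued : ∀ g : R, ∃ a : A, v a g = 1)
    (π : A → Finset R) (hdisj : ∀ i j : A, i ≠ j → Disjoint (π i) (π j)) :
    (¬ ∃ π' : A → Finset R,
        (∀ i j : A, i ≠ j → Disjoint (π' i) (π' j)) ∧
        (∀ i : A, ∑ g ∈ π i, v i g ≤ ∑ g ∈ π' i, v i g) ∧
        (∃ j : A, ∑ g ∈ π j, v j g < ∑ g ∈ π' j, v j g))
      ↔ ((∀ g : R, ∃ i : A, g ∈ π i) ∧ (∀ i : A, ∀ g ∈ π i, v i g = 1)) := by
  constructor
  · intro hP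
    by_contra h
    apply hP
    rw [not_and_or] at h
    rcases h with h | h
    · -- incomplete: some good unallocated
      push_neg at h
      obtain ⟨g, hg⟩ := h
      obtain ⟨a, ha⟩ := hvalued g
      have hgna : g ∉ π a := hg a
      refine ⟨fun j => if j = a then insert g (π a) else π j, ?_, ?_, ⟨a, ?_⟩⟩
      · intro j k hjk
        rw [Finset.disjoint_left]
        intro x hx hx'
        simp only at hx hx'
        split_ifs at hx hx' with h1 h2 h2
        · exact hjk (h1.trans h2.symm)
        · subst h1
          rcases Finset.mem_insert.1 hx with hxg | hx
          · exact hg k (by rwa [hxg] at hx')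
          · exact Finset.disjoint_left.1 (hdisj j k hjk) hx hx'
        · subst h2
          rcases Finset.mem_insert.1 hx' with hxg | hx'
          · exact hg j (by rwa [hxg] at hx)
          · exact Finset.disjoint_left.1 (hdisj j k hjk) hx hx'
        · exact Finset.disjoint_left.1 (hdisj j k hjk) hx hx'
      · intro i
        simp only
        split_ifs with h1
        · subst h1; rw [Finset.sum_insert hgna]; omega
        · exact le_refl _
      · simp only
        rw [if_pos trivial, Finset.sum_insert hgna, ha]
        omega
    · -- wasteful: some agent holds a good it does not value
      push_neg at h
      obtain ⟨i, g, hgi, hvg⟩ := h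
      have hvg0 : v i g = 0 := by have := hv01 i g; omega
      obtain ⟨a, ha⟩ := hvalued g
      have hai : a ≠ i := fun e => by rw [e] at ha; omega
      have hgnk : ∀ k, k ≠ i → g ∉ π k := fun k hk hgk =>
        (Finset.disjoint_left.1 (hdisj k i hk)) hgk hgi
      have hgna : g ∉ π a := hgnk a hai
      refine ⟨fun j => if j = i then (π i).erase g else
          if j = a then insert g (π a) else π j, ?_, ?_, ⟨a, ?_⟩⟩
      · intro j k hjk
        rw [Finset.disjoint_left]
        intro x hx hx'
        simp only at hx hx'
        have hmem : ∀ m (hm : x ∈ (if m = i then (π i).erase g else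
            if m = a then insert g (π a) else π m)),
            (x ∈ π m ∧ (m = i → x ≠ g)) ∨ (m = a ∧ x = g) := by
          intro m hm
          split_ifs at hm with h1 h2
          · exact Or.inl ⟨h1 ▸ Finset.mem_of_mem_erase hm,
              fun _ => Finset.ne_of_mem_erase hm⟩
          · rcases Finset.mem_insert.1 hm with hxg | hm'
            · exact Or.inr ⟨h2, hxg⟩
            · exact Or.inl ⟨h2 ▸ hm', fun hmi _ => hai (h2.symm.trans hmi)⟩
          · exact Or.inl ⟨hm, fun hmi _ => h1 hmi⟩
        rcases hmem j hx with ⟨hj1, hj2⟩ | ⟨hja, hxg⟩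
        · rcases hmem k hx' with ⟨hk1, hk2⟩ | ⟨hka, hxg⟩
          · exact Finset.disjoint_left.1 (hdisj j k hjk) hj1 hk1
          · subst hxg
            by_cases hji : j = i
            · exact hj2 hji rfl
            · exact hgnk j hji hj1
        · rcases hmem k hx' with ⟨hk1, hk2⟩ | ⟨hka, hxg'⟩
          · subst hxg
            by_cases hki : k = i
            · exact hk2 hki rfl
            · exact hgnk k hki hk1
          · exact hjk (hja.trans hka.symm)
      · intro m
        simp only
        split_ifs with h1 h2
        · subst h1; exact le_of_eq (Finset.sum_erase _ hvg0).symm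
        · subst h2; rw [Finset.sum_insert hgna]; omega
        · exact le_refl _
      · simp only
        rw [if_neg hai, if_pos trivial, Finset.sum_insert hgna, ha]
        omega
  · rintro ⟨hcomp, hnw⟩ ⟨π', hdisj', hge, j, hj⟩
    have key : ∀ (f : A → Finset R), (∀ i j : A, i ≠ j → Disjoint (f i) (f j)) →
        ∑ i, ∑ g ∈ f i, v i g ≤ Fintype.card R := by
      intro f hf
      calc ∑ i, ∑ g ∈ f i, v i g ≤ ∑ i, (f i).card := by
            apply Finset.sum_le_sum
            intro i _
            calc ∑ g ∈ f i, v i g ≤ ∑ g ∈ f i, 1 :=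
                  Finset.sum_le_sum fun g _ => hv01 i g
              _ = (f i).card := by simp
        _ = (Finset.univ.biUnion f).card :=
            (Finset.card_biUnion (fun i _ k _ h => hf i k h)).symm
        _ ≤ Fintype.card R := Finset.card_le_univ _
    have hle := key π' hdisj'
    have heq : ∑ i, ∑ g ∈ π i, v i g = Fintype.card R := by
      have h1 : ∀ i, ∑ g ∈ π i, v i g = (π i).card := by
        intro i
        rw [Finset.card_eq_sum_ones]
        exact Finset.sum_congr rfl (hnw i)
      have h2 : Finset.univ.biUnion π = (Finset.univ : Finset R) := by
        ext g
        simp only [Finset.mem_biUnion, Finset.mem_univ, true_and, iff_true]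
        exact hcomp g
      calc ∑ i, ∑ g ∈ π i, v i g = ∑ i, (π i).card := by simp [h1]
        _ = (Finset.univ.biUnion π).card :=
            (Finset.card_biUnion (fun i _ k _ h => hdisj i k h)).symm
        _ = Fintype.card R := by rw [h2]; rfl
    have hstrict : ∑ i, ∑ g ∈ π i, v i g < ∑ i, ∑ g ∈ π' i, v i g :=
      Finset.sum_lt_sum (fun i _ => hge i) ⟨j, Finset.mem_univ j, hj⟩
    omega
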